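/- Let R : ℝ^n → ℝ be 1-strongly convex with respect to ‖·‖₁ on the probability simplex Δ_n, and let ε > 0. For z ∈ ℝ^n let w(z) ∈ Δ_n be a maximizer over Δ_n of w ↦ ⟨z, w⟩ − R(w)/ε. Then for all z, z' ∈ ℝ^n: ‖w(z) − w(z')‖₁ ≤ ε · ‖z − z'‖_∞. -/

import Mathlib

/-- L1 norm: ‖x‖₁ = ∑ i, |x i|. -/
def l1 {n : ℕ} (x : Fin n → ℝ) : ℝ := ∑ i, |x i|

/-- L∞ norm: ‖x‖_∞ = max_i |x i|. -/
noncomputable def linf {n : ℕ} [NeZero n] (x : Fin n → ℝ) : ℝ :=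
  Finset.univ.sup' Finset.univ_nonempty (fun i => |x i|)

/-- Dot product ⟨x, y⟩ = ∑ i, x i · y i. -/
def dotn {n : ℕ} (x y : Fin n → ℝ) : ℝ := ∑ i, x i * y i

/-- R is 1-strongly convex with respect to ‖·‖₁ on the probability simplex Δ_n. -/
def StrongConvexOnSimplex {n : ℕ} (R : (Fin n → ℝ) → ℝ) : Prop :=
  ∀ w w' : Fin n → ℝ, w ∈ stdSimplex ℝ (Fin n) → w' ∈ stdSimplex ℝ (Fin n) →
    ∀ t : ℝ, 0 ≤ t → t ≤ 1 →
      R (t • w + (1 - t) • w') ≤ t * R w + (1 - t) * R w'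
        - (t * (1 - t) / 2) * (l1 (w - w')) ^ 2

lemma l1_nonneg {n : ℕ} (x : Fin n → ℝ) : 0 ≤ l1 x :=
  Finset.sum_nonneg fun i _ => abs_nonneg _

lemma l1_sub_comm {n : ℕ} (x y : Fin n → ℝ) : l1 (x - y) = l1 (y - x) := by
  unfold l1; apply Finset.sum_congr rfl; intro i _
  simp [abs_sub_comm]

lemma linf_nonneg {n : ℕ} [NeZero n] (x : Fin n → ℝ) : 0 ≤ linf x := by
  obtain ⟨i⟩ := Finset.univ_nonempty (α := Fin n)
  unfold linf
  exact le_trans (abs_nonneg (x i)) (Finset.le_sup' (fun j => |x j|) (Finset.mem_univ i))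

lemma dotn_le_linf_mul_l1 {n : ℕ} [NeZero n] (x y : Fin n → ℝ) :
    dotn x y ≤ linf x * l1 y := by
  unfold dotn l1 linf
  rw [Finset.mul_sum]
  apply Finset.sum_le_sum
  intro i _
  calc x i * y i ≤ |x i * y i| := le_abs_self _
    _ = |x i| * |y i| := abs_mul _ _
    _ ≤ linf x * |y i| :=
      mul_le_mul_of_nonneg_right (Finset.le_sup' (fun j => |x j|) (Finset.mem_univ i)) (abs_nonneg _)

lemma dotn_smul_add {n : ℕ} (z a b : Fin n → ℝ) (t : ℝ) :
    dotn z (t • b + (1 - t) • a) = t * dotn z b + (1 - t) * dotn z a := by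
  unfold dotn
  rw [Finset.mul_sum, Finset.mul_sum, ← Finset.sum_add_distrib]
  apply Finset.sum_congr rfl; intro i _
  simp [Pi.add_apply]; ring

lemma dotn_sub_sub {n : ℕ} (z z' a b : Fin n → ℝ) :
    dotn (z - z') (a - b) = dotn z a - dotn z b - dotn z' a + dotn z' b := by
  unfold dotn
  rw [← Finset.sum_sub_distrib, ← Finset.sum_sub_distrib, ← Finset.sum_add_distrib]
  apply Finset.sum_congr rfl; intro i _
  simp [Pi.sub_apply]; ring

lemma forall_t_le {c A : ℝ} (hc : 0 ≤ c)
    (h : ∀ t : ℝ, 0 < t → t ≤ 1 → (1 - t) * c ≤ A) : c ≤ A := by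
  by_contra hlt
  push_neg at hlt
  have hA : 0 ≤ A := by have := h 1 one_pos le_rfl; linarith
  have hc0 : 0 < c := lt_of_le_of_lt hA hlt
  have ht := h ((c - A) / (2 * c)) (div_pos (by linarith) (by linarith)) (by rw [div_le_one (by linarith)]; linarith)
  have : (1 - (c - A) / (2 * c)) * c = (c + A) / 2 := by field_simp; ring
  rw [this] at ht
  linarith

lemma key_gap {n : ℕ} (R : (Fin n → ℝ) → ℝ) (hR : StrongConvexOnSimplex R)
    (ε : ℝ) (hε : 0 < ε) (z a b : Fin n → ℝ)
    (ha : a ∈ stdSimplex ℝ (Fin n)) (hb : b ∈ stdSimplex ℝ (Fin n))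
    (hopt : ∀ v ∈ stdSimplex ℝ (Fin n), dotn z v - R v / ε ≤ dotn z a - R a / ε) :
    (l1 (a - b)) ^ 2 / 2 ≤ (ε * dotn z a - R a) - (ε * dotn z b - R b) := by
  apply forall_t_le (div_nonneg (sq_nonneg _) (by norm_num))
  intro t ht0 ht1
  set m := t • b + (1 - t) • a with hm_def
  have hm : m ∈ stdSimplex ℝ (Fin n) :=
    (convex_stdSimplex ℝ (Fin n)) hb ha ht0.le (by linarith) (by ring)
  have h1 : R m ≤ t * R b + (1 - t) * R a - (t * (1 - t) / 2) * (l1 (a - b)) ^ 2 := by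
    have := hR b a hb ha t ht0.le ht1
    rwa [l1_sub_comm b a] at this
  have h2 : dotn z m - R m / ε ≤ dotn z a - R a / ε := hopt m hm
  have h2' : ε * dotn z m - R m ≤ ε * dotn z a - R a := by
    have := mul_le_mul_of_nonneg_left h2 hε.le
    have e1 : ε * (dotn z m - R m / ε) = ε * dotn z m - R m := by field_simp
    have e2 : ε * (dotn z a - R a / ε) = ε * dotn z a - R a := by field_simp
    rw [e1, e2] at this; exact this
  have h3 : dotn z m = t * dotn z b + (1 - t) * dotn z a := dotn_smul_add z a b t
  have h5 : t * ((1 - t) * ((l1 (a - b)) ^ 2 / 2)) ≤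
      t * ((ε * dotn z a - R a) - (ε * dotn z b - R b)) := by
    nlinarith [mul_le_mul_of_nonneg_left h1 hε.le, h2', h3, hε, ht0]
  exact le_of_mul_le_mul_left h5 ht0

/-- the regularized-argmax map z ↦ argmax_{w ∈ Δ_n} (⟨z,w⟩ − R(w)/ε) is
ε-Lipschitz from ‖·‖_∞ to ‖·‖₁. -/
theorem stmt_9 {n : ℕ} [NeZero n] (R : (Fin n → ℝ) → ℝ)
    (hR : StrongConvexOnSimplex R) (ε : ℝ) (hε : 0 < ε)
    (w : (Fin n → ℝ) → (Fin n → ℝ))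
    (hw : ∀ z : Fin n → ℝ, w z ∈ stdSimplex ℝ (Fin n) ∧
      ∀ v ∈ stdSimplex ℝ (Fin n), dotn z v - R v / ε ≤ dotn z (w z) - R (w z) / ε) :
    ∀ z z' : Fin n → ℝ, l1 (w z - w z') ≤ ε * linf (z - z') := by
  intro z z'
  obtain ⟨ha, hopta⟩ := hw z
  obtain ⟨hb, hoptb⟩ := hw z'
  set a := w z
  set b := w z'
  have h1 := key_gap R hR ε hε z a b ha hb hopta
  have h2 := key_gap R hR ε hε z' b a hb ha hoptb
  rw [l1_sub_comm b a] at h2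
  have hsum : (l1 (a - b)) ^ 2 ≤ ε * dotn (z - z') (a - b) := by
    rw [dotn_sub_sub]; nlinarith
  have hhold := dotn_le_linf_mul_l1 (z - z') (a - b)
  have hlinf := linf_nonneg (z - z')
  have hl1 := l1_nonneg (a - b)
  rcases eq_or_lt_of_le hl1 with h0 | hpos
  · rw [← h0]; positivity
  · have : (l1 (a - b)) ^ 2 ≤ ε * (linf (z - z') * l1 (a - b)) := by
      calc (l1 (a - b)) ^ 2 ≤ ε * dotn (z - z') (a - b) := hsum
        _ ≤ ε * (linf (z - z') * l1 (a - b)) :=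
          mul_le_mul_of_nonneg_left hhold hε.le
    nlinarith
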